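/- arXiv:1703.07145 — 3 statements merged into one kernel-verified Lean document; each statement's English description precedes it below -/
import Mathlib

section
/- For every finite connected simple graph G with nonempty vertex set, one has ∑_{v ∈ V(G)} deg(v)·(deg(v) − 2) ≥ −2, where deg(v) denotes the degree of v in G and the sum is taken over all vertices (as integers). -/
open Finset

-- No integer lies strictly between `1` and `2`, so `(d - 1) * (d - 2) ≥ 0`.
lemma Int.sub_two_le_mul_sub_two (d : ℤ) : d - 2 ≤ d * (d - 2) := by
  rcases le_or_gt d 1 with h | h <;> nlinarith

namespace SimpleGraph

variable {V : Type*} [Fintype V] (G : SimpleGraph V) [DecidableRel G.Adj]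

lemma sum_degree_sub_two_eq :
    ∑ v : V, ((G.degree v : ℤ) - 2) = 2 * #G.edgeFinset - 2 * Fintype.card V := by
  rw [sum_sub_distrib, ← Nat.cast_sum, sum_degrees_eq_twice_card_edges, sum_const, card_univ]
  push_cast
  ring

variable {G}

lemma Connected.neg_two_le_sum_degree_sub_two (hG : G.Connected) :
    (-2 : ℤ) ≤ ∑ v : V, ((G.degree v : ℤ) - 2) := by
  have hcard := hG.card_vert_le_card_edgeSet_add_one
  rw [Nat.card_eq_fintype_card, ← coe_edgeFinset, Nat.card_coe_set_eq, Set.ncard_coe_finset]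
    at hcard
  rw [sum_degree_sub_two_eq]
  omega

end SimpleGraph

theorem sum_degree_mul_degree_sub_two_ge_neg_two_general
    {V : Type*} [Fintype V] (G : SimpleGraph V) [DecidableRel G.Adj]
    (hG : G.Connected) :
    (-2 : ℤ) ≤ ∑ v : V, (G.degree v : ℤ) * ((G.degree v : ℤ) - 2) :=
  hG.neg_two_le_sum_degree_sub_two.trans
    (sum_le_sum fun _ _ => Int.sub_two_le_mul_sub_two _)

/-- For every finite connected simple graph `G` on a nonempty vertex set,
`∑_{v} deg(v)·(deg(v) − 2) ≥ −2` (as integers). -/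
theorem sum_degree_mul_degree_sub_two_ge_neg_two
    {V : Type*} [Fintype V] [Nonempty V] (G : SimpleGraph V) [DecidableRel G.Adj]
    (hG : G.Connected) :
    (-2 : ℤ) ≤ ∑ v : V, (G.degree v : ℤ) * ((G.degree v : ℤ) - 2) :=
  sum_degree_mul_degree_sub_two_ge_neg_two_general G hG
end

section
/- Let G be a finite simple graph on vertex set V with degree function d, let ℓ = ∑_{v∈V} d(v) and assume ℓ > 0. Let C ⊆ V be the vertex set of a connected component of G, and assume ∑_{v∉C} d(v) > 0. Define ν = (∑_{v∈V} d(v)(d(v)−1))/ℓ and ν̃ = (∑_{v∉C} d(v)(d(v)−1))/(∑_{v∉C} d(v)). Then (ν̃ − 1)·(1 − (∑_{v∈C} d(v))/ℓ) ≤ ν − 1 + 2/ℓ. -/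
/-!
Write `ℓ = b + a` with `b` and `a` the degree sums inside and outside `C`. Multiplying out, both
sides become fractions over `ℓ`, and the inequality reduces to `b ≤ ∑_{v∈C} d(v)(d(v)−1) + 2`,
i.e. `∑_{v∈C} d(v)(d(v)−2) ≥ −2`. This holds because `d(d−2) ≥ d−2` for every integer `d`
(as `(d−1)(d−2) ≥ 0`), and `∑_{v∈C} d(v) = 2|E(C)| ≥ 2(|C|−1)` since the component is connected.
-/

open Finset

theorem natCast_sub_two_le_mul_sub_two (n : ℕ) : (n : ℝ) - 2 ≤ n * (n - 2) := by
  rcases n with _ | _ | n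
  · norm_num
  · norm_num
  · push_cast
    nlinarith

theorem div_sub_one_mul_one_sub_div_le {a b s t : ℝ} (ha : 0 < a) (hab : 0 < b + a)
    (hb : b ≤ s + 2) :
    (t / a - 1) * (1 - b / (b + a)) ≤ (s + t) / (b + a) - 1 + 2 / (b + a) := by
  have hdiff : (s + t) / (b + a) - 1 + 2 / (b + a) - (t / a - 1) * (1 - b / (b + a)) =
      (s - b + 2) / (b + a) := by
    field_simp
    ring
  rw [← sub_nonneg, hdiff]
  exact div_nonneg (by linarith) hab.le

namespace SimpleGraph.ConnectedComponent

variable {V : Type*} [Fintype V] {G : SimpleGraph V} [DecidableRel G.Adj]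
  (c : G.ConnectedComponent) [DecidablePred (· ∈ c.supp)]

theorem degree_induce_supp (v : c.supp) : (G.induce c.supp).degree v = G.degree v :=
  degree_induce_of_neighborSet_subset fun _ hw => c.mem_supp_of_adj_mem_supp v.2 hw

theorem sum_degree_supp_eq_two_mul_card_edgeFinset_induce :
    ∑ v ∈ univ.filter (· ∈ c.supp), G.degree v = 2 * #(G.induce c.supp).edgeFinset := by
  rw [← sum_degrees_eq_twice_card_edges, sum_subtype (p := (· ∈ c.supp)) _ (by simp)]
  exact (sum_congr rfl fun v _ => c.degree_induce_supp v).symm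

theorem two_mul_card_supp_le_sum_degree_add_two :
    2 * #(univ.filter (· ∈ c.supp)) ≤ ∑ v ∈ univ.filter (· ∈ c.supp), G.degree v + 2 := by
  have h := c.maximal_connected_induce_supp.1.card_vert_le_card_edgeSet_add_one
  rw [Nat.card_eq_fintype_card, Fintype.card_subtype, Nat.card_eq_fintype_card,
    ← edgeFinset_card] at h
  rw [c.sum_degree_supp_eq_two_mul_card_edgeFinset_induce]
  omega

theorem neg_two_le_sum_degree_mul_degree_sub_two :
    (-2 : ℝ) ≤ ∑ v ∈ univ.filter (· ∈ c.supp), (G.degree v : ℝ) * (G.degree v - 2) := by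
  have hcard : 2 * (#(univ.filter (· ∈ c.supp)) : ℝ) ≤
      ∑ v ∈ univ.filter (· ∈ c.supp), (G.degree v : ℝ) + 2 := by
    exact_mod_cast c.two_mul_card_supp_le_sum_degree_add_two
  calc (-2 : ℝ) ≤ ∑ v ∈ univ.filter (· ∈ c.supp), ((G.degree v : ℝ) - 2) := by
        rw [sum_sub_distrib, sum_const, nsmul_eq_mul]
        linarith
    _ ≤ _ := sum_le_sum fun v _ => natCast_sub_two_le_mul_sub_two _

end SimpleGraph.ConnectedComponent

/-- Removing the vertex set `C` of one connected component from a finite simple graph: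
if `ν` is the criticality parameter of the whole graph and `ν̃` the one of the graph
restricted to the complement of `C`, then
`(ν̃ − 1)·(1 − (∑_{v∈C} d(v))/ℓ) ≤ ν − 1 + 2/ℓ`. -/
theorem criticality_after_removing_component
    {V : Type*} [Fintype V] (G : SimpleGraph V) [DecidableRel G.Adj]
    (C : Set V) [DecidablePred (· ∈ C)]
    (hC : ∃ c : G.ConnectedComponent, C = c.supp)
    (hℓ : 0 < ∑ v : V, (G.degree v : ℝ))
    (hout : 0 < ∑ v ∈ univ.filter (· ∉ C), (G.degree v : ℝ)) :
    ((∑ v ∈ univ.filter (· ∉ C), (G.degree v : ℝ) * ((G.degree v : ℝ) - 1)) /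
        (∑ v ∈ univ.filter (· ∉ C), (G.degree v : ℝ)) - 1) *
      (1 - (∑ v ∈ univ.filter (· ∈ C), (G.degree v : ℝ)) / (∑ v : V, (G.degree v : ℝ))) ≤
    (∑ v : V, (G.degree v : ℝ) * ((G.degree v : ℝ) - 1)) / (∑ v : V, (G.degree v : ℝ)) - 1 +
      2 / (∑ v : V, (G.degree v : ℝ)) := by
  obtain ⟨c, rfl⟩ := hC
  have hinside : ∑ v ∈ univ.filter (· ∈ c.supp), (G.degree v : ℝ) ≤
      ∑ v ∈ univ.filter (· ∈ c.supp), (G.degree v : ℝ) * ((G.degree v : ℝ) - 1) + 2 := by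
    have hsum : ∑ v ∈ univ.filter (· ∈ c.supp), (G.degree v : ℝ) * ((G.degree v : ℝ) - 2) =
        ∑ v ∈ univ.filter (· ∈ c.supp), (G.degree v : ℝ) * ((G.degree v : ℝ) - 1) -
          ∑ v ∈ univ.filter (· ∈ c.supp), (G.degree v : ℝ) := by
      rw [← sum_sub_distrib]
      exact sum_congr rfl fun _ _ => by ring
    linarith [c.neg_two_le_sum_degree_mul_degree_sub_two]
  rw [← sum_filter_add_sum_filter_not univ (· ∈ c.supp)] at hℓ ⊢
  rw [← sum_filter_add_sum_filter_not univ (· ∈ c.supp)]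
  exact div_sub_one_mul_one_sub_div_le hout hℓ hinside
end

section
/- Let G be a finite simple graph on vertex set V with degree function d, let S ⊆ V, and let G' be the graph obtained from G by deleting every edge having at least one endpoint in S. Write d'(v) for the degree of v in G'. Then: (i) d'(v) ≤ d(v) for all v ∈ V and d'(v) = 0 for v ∈ S; (ii) ∑_{v∈V} d'(v) ≥ ∑_{v∈V} d(v) − 2·∑_{v∈S} d(v); and (iii) if ∑_{v∈V} d(v) − 2·∑_{v∈S} d(v) > 0, then (∑_{v∈V} d'(v)(d'(v)−1))/(∑_{v∈V} d'(v)) ≤ (∑_{v∈V} d(v)(d(v)−1) − ∑_{v∈S} d(v)(d(v)−1))/(∑_{v∈V} d(v) − 2·∑_{v∈S} d(v)), where in (iii) the left-hand side is interpreted as 0 when ∑_{v∈V} d'(v) = 0. -/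
/-!
Every edge of `G` that is lost in `G'` contains a vertex of `S`, so at most `∑_{v ∈ S} d(v)` edges
are lost, and by the handshake lemma the total degree drops by at most `2 ∑_{v ∈ S} d(v)`. On the
other hand `n ↦ n (n - 1)` is monotone on `ℕ` and `d'` vanishes on `S`, so the numerator
of the criticality ratio can only decrease from `∑_{v ∉ S} d(v) (d(v) - 1)`, while its denominator
can only increase from the lower bound on the total degree.
-/

open Finset SimpleGraph

section DescFactorialTwo

variable {R : Type*} [Ring R] [PartialOrder R] [IsOrderedRing R]

theorem Nat.cast_mul_cast_sub_one_nonneg (n : ℕ) : (0 : R) ≤ n * (n - 1) := by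
  simpa only [Nat.cast_descFactorial_two] using (n.descFactorial 2).cast_nonneg (α := R)

theorem Nat.cast_mul_cast_sub_one_le_of_le {m n : ℕ} (h : m ≤ n) :
    (m : R) * (m - 1) ≤ n * (n - 1) := by
  simpa only [Nat.cast_descFactorial_two] using Nat.mono_cast (α := R) (Nat.descFactorial_le 2 h)

end DescFactorialTwo

theorem Finset.sum_le_sum_sub_sum_of_nonpos {ι R : Type*} [Fintype ι] [AddCommGroup R]
    [PartialOrder R] [IsOrderedAddMonoid R] {f g : ι → R} (s : Finset ι)
    (hs : ∀ i ∈ s, f i ≤ 0) (hsc : ∀ i ∉ s, f i ≤ g i) :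
    ∑ i, f i ≤ ∑ i, g i - ∑ i ∈ s, g i := by
  classical
  rw [← sum_compl_add_sum s f, ← sum_compl_add_sum s g, add_sub_cancel_right]
  have hcompl : ∑ i ∈ sᶜ, f i ≤ ∑ i ∈ sᶜ, g i :=
    sum_le_sum fun i hi => hsc i (mem_compl.mp hi)
  have hs_sum : ∑ i ∈ s, f i ≤ 0 := sum_nonpos hs
  exact (add_le_add hcompl hs_sum).trans_eq (add_zero _)

namespace SimpleGraph

variable {V : Type*} [Fintype V] {G H : SimpleGraph V} [DecidableRel G.Adj] [DecidableRel H.Adj]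

theorem card_edgeFinset_le_card_edgeFinset_add_sum_degree (s : Finset V)
    (hs : ∀ u v, G.Adj u v → ¬H.Adj u v → u ∈ s ∨ v ∈ s) :
    #G.edgeFinset ≤ #H.edgeFinset + ∑ v ∈ s, G.degree v := by
  classical
  have hcover : G.edgeFinset ⊆ H.edgeFinset ∪ s.biUnion (G.incidenceFinset ·) := by
    intro e he
    induction e using Sym2.ind with
    | h u v =>
      rw [mem_edgeFinset, mem_edgeSet] at he
      by_cases hH : H.Adj u v
      · exact mem_union_left _ (mem_edgeFinset.mpr hH)
      refine mem_union_right _ (mem_biUnion.mpr ?_)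
      rcases hs u v he hH with hu | hv
      · exact ⟨u, hu, (mem_incidenceFinset _ _ _).mpr ⟨he, Sym2.mem_mk_left u v⟩⟩
      · exact ⟨v, hv, (mem_incidenceFinset _ _ _).mpr ⟨he, Sym2.mem_mk_right u v⟩⟩
  calc #G.edgeFinset ≤ #(H.edgeFinset ∪ s.biUnion (G.incidenceFinset ·)) := card_le_card hcover
    _ ≤ #H.edgeFinset + #(s.biUnion (G.incidenceFinset ·)) := card_union_le _ _
    _ ≤ #H.edgeFinset + ∑ v ∈ s, #(G.incidenceFinset v) := by gcongr; exact card_biUnion_le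
    _ = #H.edgeFinset + ∑ v ∈ s, G.degree v := by simp only [card_incidenceFinset_eq_degree]

theorem sum_degree_sub_two_mul_sum_degree_le {R : Type*} [Ring R] [PartialOrder R]
    [IsOrderedRing R] (s : Finset V)
    (hs : ∀ u v, G.Adj u v → ¬H.Adj u v → u ∈ s ∨ v ∈ s) :
    ∑ v, (G.degree v : R) - 2 * ∑ v ∈ s, (G.degree v : R) ≤ ∑ v, (H.degree v : R) := by
  have hnat : ∑ v, G.degree v ≤ ∑ v, H.degree v + 2 * ∑ v ∈ s, G.degree v := by
    rw [sum_degrees_eq_twice_card_edges, sum_degrees_eq_twice_card_edges]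
    linarith [card_edgeFinset_le_card_edgeFinset_add_sum_degree s hs]
  have hcast := Nat.mono_cast (α := R) hnat
  push_cast at hcast
  rw [sub_le_iff_le_add]
  exact hcast

end SimpleGraph

/-- Deleting all edges incident to a set `S` of vertices: monotonicity of degrees,
a lower bound on the total degree, and comparison of the criticality parameters. -/
theorem delete_incident_edges_degree_criticality
    {V : Type*} [Fintype V] (G G' : SimpleGraph V)
    [DecidableRel G.Adj] [DecidableRel G'.Adj]
    (S : Set V) [DecidablePred (· ∈ S)]
    (hG' : ∀ u v, G'.Adj u v ↔ G.Adj u v ∧ u ∉ S ∧ v ∉ S) :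
    (∀ v : V, G'.degree v ≤ G.degree v) ∧
    (∀ v ∈ S, G'.degree v = 0) ∧
    ((∑ v : V, (G.degree v : ℤ)) - 2 * ∑ v ∈ univ.filter (· ∈ S), (G.degree v : ℤ)
        ≤ ∑ v : V, (G'.degree v : ℤ)) ∧
    ((0 : ℝ) < (∑ v : V, (G.degree v : ℝ))
        - 2 * ∑ v ∈ univ.filter (· ∈ S), (G.degree v : ℝ) →
      (∑ v : V, (G'.degree v : ℝ) * ((G'.degree v : ℝ) - 1)) /
          (∑ v : V, (G'.degree v : ℝ)) ≤
        ((∑ v : V, (G.degree v : ℝ) * ((G.degree v : ℝ) - 1))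
            - ∑ v ∈ univ.filter (· ∈ S), (G.degree v : ℝ) * ((G.degree v : ℝ) - 1)) /
          ((∑ v : V, (G.degree v : ℝ))
            - 2 * ∑ v ∈ univ.filter (· ∈ S), (G.degree v : ℝ))) := by
  have hle : G' ≤ G := fun u v h => ((hG' u v).mp h).1
  have hmono : ∀ v, G'.degree v ≤ G.degree v := fun v => degree_le_of_le hle
  have hzero : ∀ v ∈ S, G'.degree v = 0 := fun v hv =>
    (degree_eq_zero_iff_notMem_support _ _).mpr fun ⟨w, hw⟩ => ((hG' v w).mp hw).2.1 hv
  have hlost : ∀ u v, G.Adj u v → ¬G'.Adj u v →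
      u ∈ univ.filter (· ∈ S) ∨ v ∈ univ.filter (· ∈ S) := by
    simp only [hG', mem_filter, mem_univ, true_and]
    tauto
  refine ⟨hmono, hzero, sum_degree_sub_two_mul_sum_degree_le _ hlost, fun hpos => ?_⟩
  have hnum : ∑ v, (G'.degree v : ℝ) * (G'.degree v - 1) ≤
      ∑ v, (G.degree v : ℝ) * (G.degree v - 1)
        - ∑ v ∈ univ.filter (· ∈ S), (G.degree v : ℝ) * (G.degree v - 1) := by
    refine sum_le_sum_sub_sum_of_nonpos _ (fun v hv => ?_)
      fun v _ => Nat.cast_mul_cast_sub_one_le_of_le (hmono v)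
    simp [hzero v (mem_filter.mp hv).2]
  exact div_le_div₀ ((sum_nonneg fun v _ => Nat.cast_mul_cast_sub_one_nonneg _).trans hnum) hnum
    hpos (sum_degree_sub_two_mul_sum_degree_le _ hlost)
end
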